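/- The dual map w: (ζ₁,ζ₂) ↦ (ζ̄₁ + βζ₁, ζ̄₂ − iβζ₁² + iβζ̄₁²) sends S_β bijectively onto the dual hypersurface S_{β,dual} = {(w₁,w₂) ∈ ℂ² : −(1−β²) Im(w₂) = |w₁|² − β Re(w₁²)}, with inverse (w₁,w₂) ↦ ((w̄₁ − βw₁)/(1−β²), w₂ + 2i w₁(w̄₁ − βw₁)/(1−β²)); moreover S_{β,dual} is linearly equivalent to S_β via (w₁,w₂) ↦ (i w₁/√(1−β²), −w₂). -/

import Mathlib

open Complex

/-- The model hypersurface `S_β ⊂ ℂ²`. -/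
def Sbeta (β : ℝ) : Set (ℂ × ℂ) :=
  {ζ : ℂ × ℂ | ζ.2.im = ‖ζ.1‖ ^ 2 + β * (ζ.1 ^ 2).re}

/-- The projective dual hypersurface of `S_β`. -/
def SbetaDual (β : ℝ) : Set (ℂ × ℂ) :=
  {w : ℂ × ℂ | -((1 - β ^ 2) * w.2.im) = ‖w.1‖ ^ 2 - β * (w.1 ^ 2).re}

/-- The dual map `w`. -/
def dualMap (β : ℝ) (ζ : ℂ × ℂ) : ℂ × ℂ :=
  ((starRingEnd ℂ) ζ.1 + β * ζ.1,
    (starRingEnd ℂ) ζ.2 - Complex.I * β * ζ.1 ^ 2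
      + Complex.I * β * ((starRingEnd ℂ) ζ.1) ^ 2)

/-- The inverse of the dual map. -/
noncomputable def dualMapInv (β : ℝ) (w : ℂ × ℂ) : ℂ × ℂ :=
  (((starRingEnd ℂ) w.1 - β * w.1) / (1 - β ^ 2),
    w.2 + 2 * Complex.I * w.1 * ((starRingEnd ℂ) w.1 - β * w.1) / (1 - β ^ 2))

/-!
Write `sbetaForm β z = |z|² + β Re z² = (1 + β) x² + (1 - β) y²`, so that `S_β` is
`Im ζ₂ = sbetaForm β ζ₁` and the dual is `-(1 - β²) Im w₂ = sbetaForm (-β) w₁`.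
The first component of the dual map is the ℝ-linear map `z ↦ z̄ + βz`, invertible for
`β² ≠ 1`, and it satisfies `sbetaForm (-β) (z̄ + βz) = (1 - β²) sbetaForm β z`, while
`Im w₂ = -Im ζ₂`; hence `S_β` maps into the dual. The inverse formula sends `w(ζ)` back to
`(ζ₁, ζ̄₂ + 2i sbetaForm β ζ₁)`, which is `ζ` exactly on `S_β`; the other composition then
follows from the injectivity of the inverse formula. The rescaling works because
`sbetaForm β (i w / r) = sbetaForm (-β) w / r²`.
-/

open ComplexConjugate

noncomputable def sbetaForm (β : ℝ) (z : ℂ) : ℝ :=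
  ‖z‖ ^ 2 + β * (z ^ 2).re

section Form

variable {β : ℝ}

theorem mem_Sbeta_iff {ζ : ℂ × ℂ} : ζ ∈ Sbeta β ↔ ζ.2.im = sbetaForm β ζ.1 :=
  Iff.rfl

theorem mem_SbetaDual_iff {w : ℂ × ℂ} :
    w ∈ SbetaDual β ↔ -((1 - β ^ 2) * w.2.im) = sbetaForm (-β) w.1 := by
  simp only [SbetaDual, sbetaForm, Set.mem_ofPred_eq, neg_mul, ← sub_eq_add_neg]

variable (β)

theorem sbetaForm_eq_re_im (z : ℂ) :
    sbetaForm β z = (1 + β) * z.re ^ 2 + (1 - β) * z.im ^ 2 := by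
  rw [sbetaForm, Complex.sq_norm, Complex.normSq_apply, pow_two z, Complex.mul_re]
  ring

theorem sbetaForm_I_mul (z : ℂ) : sbetaForm β (I * z) = sbetaForm (-β) z := by
  simp only [sbetaForm_eq_re_im, Complex.I_mul_re, Complex.I_mul_im]
  ring

theorem sbetaForm_div_ofReal (z : ℂ) (r : ℝ) :
    sbetaForm β (z / r) = sbetaForm β z / r ^ 2 := by
  simp only [sbetaForm_eq_re_im, Complex.div_ofReal_re, Complex.div_ofReal_im]
  ring

end Form

section DualMap

variable (β : ℝ)

theorem sbetaForm_neg_dualMap_fst (ζ : ℂ × ℂ) :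
    sbetaForm (-β) (dualMap β ζ).1 = (1 - β ^ 2) * sbetaForm β ζ.1 := by
  simp only [dualMap, sbetaForm_eq_re_im, Complex.add_re, Complex.add_im, Complex.conj_re,
    Complex.conj_im, Complex.re_ofReal_mul, Complex.im_ofReal_mul]
  ring

theorem dualMap_snd_im (ζ : ℂ × ℂ) : (dualMap β ζ).2.im = -ζ.2.im := by
  simp only [dualMap, Complex.add_im, Complex.sub_im, Complex.conj_im, pow_two,
    Complex.mul_im, Complex.mul_re, Complex.conj_re, Complex.I_re, Complex.I_im,
    Complex.ofReal_re, Complex.ofReal_im]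
  ring

theorem mapsTo_dualMap : Set.MapsTo (dualMap β) (Sbeta β) (SbetaDual β) := by
  intro ζ hζ
  rw [mem_SbetaDual_iff, sbetaForm_neg_dualMap_fst, dualMap_snd_im, ← mem_Sbeta_iff.mp hζ]
  ring

theorem dualMapInv_snd (w : ℂ × ℂ) :
    (dualMapInv β w).2 = w.2 + 2 * I * w.1 * (dualMapInv β w).1 := by
  simp only [dualMapInv, mul_div_assoc]

theorem dualMapInv_snd_im (w : ℂ × ℂ) :
    (dualMapInv β w).2.im = w.2.im + 2 * sbetaForm (-β) w.1 / (1 - β ^ 2) := by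
  have hβ' : (1 : ℂ) - β ^ 2 = ((1 - β ^ 2 : ℝ) : ℂ) := by push_cast; ring
  simp only [dualMapInv, hβ', Complex.add_im, Complex.div_ofReal_im, sbetaForm_eq_re_im]
  simp only [Complex.mul_im, Complex.mul_re, Complex.sub_re, Complex.sub_im, Complex.conj_re,
    Complex.conj_im, Complex.I_re, Complex.I_im, Complex.ofReal_re, Complex.ofReal_im,
    Complex.re_ofNat, Complex.im_ofNat]
  ring

variable {β} (hβ : 1 - β ^ 2 ≠ 0)
include hβ

theorem dualMapInv_dualMap_fst (ζ : ℂ × ℂ) : (dualMapInv β (dualMap β ζ)).1 = ζ.1 := by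
  have hβ' : (1 : ℂ) - β ^ 2 ≠ 0 := by exact_mod_cast hβ
  simp only [dualMap, dualMapInv, map_add, map_mul, Complex.conj_conj, Complex.conj_ofReal]
  field_simp
  ring

theorem dualMap_dualMapInv_fst (w : ℂ × ℂ) : (dualMap β (dualMapInv β w)).1 = w.1 := by
  have hβ' : (1 : ℂ) - β ^ 2 ≠ 0 := by exact_mod_cast hβ
  simp only [dualMap, dualMapInv, map_div₀, map_sub, map_mul, map_one, map_pow,
    Complex.conj_conj, Complex.conj_ofReal]
  field_simp
  ring

theorem dualMapInv_dualMap_snd (ζ : ℂ × ℂ) :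
    (dualMapInv β (dualMap β ζ)).2 = conj ζ.2 + 2 * I * sbetaForm β ζ.1 := by
  rw [dualMapInv_snd, dualMapInv_dualMap_fst hβ]
  apply Complex.ext <;>
  simp only [dualMap, sbetaForm_eq_re_im, Complex.add_re, Complex.add_im, Complex.sub_re,
    Complex.sub_im, Complex.mul_re, Complex.mul_im, Complex.conj_re, Complex.conj_im, pow_two,
    Complex.I_re, Complex.I_im, Complex.ofReal_re, Complex.ofReal_im, Complex.re_ofNat,
    Complex.im_ofNat] <;>
  ring

theorem leftInvOn_dualMapInv : Set.LeftInvOn (dualMapInv β) (dualMap β) (Sbeta β) := by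
  intro ζ hζ
  refine Prod.ext (dualMapInv_dualMap_fst hβ ζ) ?_
  rw [dualMapInv_dualMap_snd hβ, ← mem_Sbeta_iff.mp hζ]
  have hsub := sub_conj ζ.2
  push_cast at hsub
  linear_combination -hsub

theorem mapsTo_dualMapInv : Set.MapsTo (dualMapInv β) (SbetaDual β) (Sbeta β) := by
  intro w hw
  have hform : sbetaForm (-β) w.1 = (1 - β ^ 2) * sbetaForm β (dualMapInv β w).1 := by
    rw [← sbetaForm_neg_dualMap_fst, dualMap_dualMapInv_fst hβ]
  rw [mem_Sbeta_iff, dualMapInv_snd_im β]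
  rw [mem_SbetaDual_iff] at hw
  field_simp
  linear_combination hform - hw

theorem dualMapInv_injective : Function.Injective (dualMapInv β) := by
  intro w w' h
  have h₁ : w.1 = w'.1 := by
    rw [← dualMap_dualMapInv_fst hβ w, ← dualMap_dualMapInv_fst hβ w', h]
  have h₂ := congrArg Prod.snd h
  rw [dualMapInv_snd, dualMapInv_snd, h, h₁, add_left_inj] at h₂
  exact Prod.ext h₁ h₂

theorem rightInvOn_dualMapInv : Set.RightInvOn (dualMapInv β) (dualMap β) (SbetaDual β) :=
  fun _ hw ↦ dualMapInv_injective hβ <|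
    leftInvOn_dualMapInv hβ (mapsTo_dualMapInv hβ hw)

end DualMap

section Rescale

variable {β r : ℝ}

theorem rescale_mem_Sbeta_iff (hr : r ^ 2 = 1 - β ^ 2) (hr0 : r ≠ 0) (w : ℂ × ℂ) :
    (I * w.1 / r, -w.2) ∈ Sbeta β ↔ w ∈ SbetaDual β := by
  have hβ : 1 - β ^ 2 ≠ 0 := hr ▸ pow_ne_zero 2 hr0
  rw [mem_Sbeta_iff, mem_SbetaDual_iff, sbetaForm_div_ofReal, sbetaForm_I_mul, hr,
    Complex.neg_im, eq_div_iff hβ]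
  constructor <;> intro h <;> linarith

theorem bijOn_rescale (hr : r ^ 2 = 1 - β ^ 2) (hr0 : r ≠ 0) :
    Set.BijOn (fun w : ℂ × ℂ ↦ (I * w.1 / r, -w.2)) (SbetaDual β) (Sbeta β) := by
  have hr0' : (r : ℂ) ≠ 0 := Complex.ofReal_ne_zero.mpr hr0
  refine ⟨fun w hw ↦ (rescale_mem_Sbeta_iff hr hr0 w).mpr hw, ?_, ?_⟩
  · intro w _ w' _ h
    simp only [Prod.mk.injEq, neg_inj] at h
    exact Prod.ext ((mul_right_inj' I_ne_zero).mp ((div_left_inj' hr0').mp h.1)) h.2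
  · intro ζ hζ
    let w : ℂ × ℂ := (-I * r * ζ.1, -ζ.2)
    have hw : (I * w.1 / r, -w.2) = ζ := by
      refine Prod.ext ?_ (neg_neg _)
      field_simp
      linear_combination (-(r : ℂ) * ζ.1) * I_sq
    exact ⟨w, (rescale_mem_Sbeta_iff hr hr0 w).mp (by rwa [hw]), hw⟩

end Rescale

theorem dualMap_bijOn (β : ℝ) (hβ0 : 0 ≤ β) (hβ1 : β < 1) :
    Set.BijOn (dualMap β) (Sbeta β) (SbetaDual β) ∧
    (∀ ζ ∈ Sbeta β, dualMapInv β (dualMap β ζ) = ζ) ∧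
    (∀ w ∈ SbetaDual β, dualMap β (dualMapInv β w) = w) ∧
    Set.BijOn (fun w : ℂ × ℂ =>
        ((Complex.I * w.1 / Real.sqrt (1 - β ^ 2) : ℂ), -w.2))
      (SbetaDual β) (Sbeta β) := by
  have hpos : 0 < 1 - β ^ 2 := by nlinarith
  have hβ : 1 - β ^ 2 ≠ 0 := hpos.ne'
  have hinv : Set.InvOn (dualMapInv β) (dualMap β) (Sbeta β) (SbetaDual β) :=
    ⟨leftInvOn_dualMapInv hβ, rightInvOn_dualMapInv hβ⟩
  exact ⟨hinv.bijOn (mapsTo_dualMap β) (mapsTo_dualMapInv hβ), hinv.1, hinv.2,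
    bijOn_rescale (Real.sq_sqrt hpos.le) (Real.sqrt_ne_zero'.mpr hpos)⟩
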